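/- arXiv:2308.13145 — 2 statements merged into one kernel-verified Lean document; each statement's English description precedes it below -/
import Mathlib

section
/- Let (S_n) be a zero-delayed renewal process with interarrival distribution F satisfying ∫₀^∞ x^q F(dx) < ∞ for some q > 0, forward recurrence time B_t, and renewal function Φ. Then E[B_t^q] ≤ (∫₀^∞ x^q F(dx)) · Φ(t) for all t ≥ 0; consequently there exist constants a, b > 0 such that E[B_t^q] ≤ a + b t for all t ≥ 0. -/
/-!
On the event that some renewal epoch exceeds `t`, the overshoot `B_t = S_{m+1} - t` is at most
the interarrival time `τ_m` following the last epoch `S_m ≤ t`, so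
`B_t^q ≤ ∑ₙ 1{S_n ≤ t} τ_n^q`. As `τ_n` is independent of `S_n`, whose law is `F^{*n}`, taking
expectations gives `E[B_t^q] ≤ Φ([0,t]) ∫ x^q dF`; finiteness of `Φ([0,t])` makes the event
almost sure.

For the growth of `Φ`, a Chernoff bound gives `F^{*n}([0,t]) ≤ e^{st} L(s)^n`, where `L` is the
Laplace transform of `F`, so `Φ([0,t]) ≤ e^{st} / (1 - L(s))`. From `1 - e^{-u} ≥ u / (1 + u)`
one gets `1 - L(s) ≥ s ∫ x / (1 + x) dF` for `s ≤ 1`, and `s = 1 / (t + 1)` makes the bound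
linear in `t`.
-/

open MeasureTheory ProbabilityTheory

/-- `n`-fold convolution power of a measure on `ℝ`, with `F^{*0} = δ₀`. -/
noncomputable def convPow (F : Measure ℝ) : ℕ → Measure ℝ
  | 0 => Measure.dirac 0
  | n + 1 => (convPow F n).conv F

/-- The renewal measure `Φ = Σ_{n≥0} F^{*n}`. -/
noncomputable def renewalMeasure (F : Measure ℝ) : Measure ℝ :=
  Measure.sum (fun n => convPow F n)

open Real Set
open scoped ENNReal

lemma measurable_ofReal_exp_neg_mul (s : ℝ) :
    Measurable fun x : ℝ => ENNReal.ofReal (exp (-(s * x))) := by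
  fun_prop

lemma lintegral_exp_neg_mul_convPow (F : Measure ℝ) [SFinite F] (s : ℝ) (n : ℕ) :
    ∫⁻ x, ENNReal.ofReal (exp (-(s * x))) ∂(convPow F n) =
      (∫⁻ x, ENNReal.ofReal (exp (-(s * x))) ∂F) ^ n := by
  induction n with
  | zero => simp [convPow, lintegral_dirac]
  | succ n ih =>
    have hsplit (x y : ℝ) : ENNReal.ofReal (exp (-(s * (x + y)))) =
        ENNReal.ofReal (exp (-(s * x))) * ENNReal.ofReal (exp (-(s * y))) := by
      rw [← ENNReal.ofReal_mul (exp_nonneg _), ← exp_add, mul_add, neg_add]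
    simp_rw [convPow, Measure.lintegral_conv (measurable_ofReal_exp_neg_mul s), hsplit,
      lintegral_const_mul _ (measurable_ofReal_exp_neg_mul s),
      lintegral_mul_const _ (measurable_ofReal_exp_neg_mul s), ih, pow_succ]

lemma measure_Iic_le_exp_mul_lintegral (μ : Measure ℝ) {s : ℝ} (hs : 0 ≤ s) (t : ℝ) :
    μ (Iic t) ≤ ENNReal.ofReal (exp (s * t)) * ∫⁻ x, ENNReal.ofReal (exp (-(s * x))) ∂μ := by
  rw [← lintegral_const_mul _ (measurable_ofReal_exp_neg_mul s), ← lintegral_indicator_one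
    measurableSet_Iic]
  refine lintegral_mono fun x => ?_
  rw [indicator_apply, ← ENNReal.ofReal_mul (exp_nonneg _), ← exp_add]
  split_ifs with hx
  · exact ENNReal.one_le_ofReal.2 (one_le_exp (by nlinarith [mem_Iic.1 hx]))
  · exact zero_le

lemma exp_neg_mul_add_mul_div_le_one {s x : ℝ} (hs0 : 0 ≤ s) (hs1 : s ≤ 1) (hx : 0 ≤ x) :
    exp (-(s * x)) + s * (x / (1 + x)) ≤ 1 := by
  have hsx : 0 ≤ s * x := mul_nonneg hs0 hx
  have hexp : exp (-(s * x)) ≤ (1 + s * x)⁻¹ := by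
    rw [exp_neg]
    exact inv_anti₀ (by positivity) (by linarith [add_one_le_exp (s * x)])
  have hfrac : s * (x / (1 + x)) ≤ s * x / (1 + s * x) := by
    rw [mul_div_assoc']
    exact div_le_div_of_nonneg_left hsx (by positivity) (by nlinarith)
  calc exp (-(s * x)) + s * (x / (1 + x)) ≤ (1 + s * x)⁻¹ + s * x / (1 + s * x) :=
        add_le_add hexp hfrac
    _ = 1 := by field_simp

lemma lintegral_exp_neg_mul_add_le_one (F : Measure ℝ) [IsProbabilityMeasure F]
    (hF : ∀ᵐ x ∂F, 0 ≤ x) {s : ℝ} (hs0 : 0 ≤ s) (hs1 : s ≤ 1) :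
    ∫⁻ x, ENNReal.ofReal (exp (-(s * x))) ∂F +
      ENNReal.ofReal s * ∫⁻ x, ENNReal.ofReal (x / (1 + x)) ∂F ≤ 1 := by
  rw [← lintegral_const_mul' _ _ ENNReal.ofReal_ne_top,
    ← lintegral_add_left (measurable_ofReal_exp_neg_mul s)]
  calc _ ≤ ∫⁻ _, 1 ∂F := by
        refine lintegral_mono_ae ?_
        filter_upwards [hF] with x hx
        rw [← ENNReal.ofReal_mul hs0, ← ENNReal.ofReal_add (exp_nonneg _) (by positivity)]
        exact ENNReal.ofReal_le_one.2 (exp_neg_mul_add_mul_div_le_one hs0 hs1 hx)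
    _ = 1 := by simp

lemma renewalMeasure_apply (F : Measure ℝ) {s : Set ℝ} (hs : MeasurableSet s) :
    renewalMeasure F s = ∑' n, convPow F n s :=
  Measure.sum_apply _ hs

theorem renewalMeasure_Icc_le (F : Measure ℝ) [IsProbabilityMeasure F] (hF : ∀ᵐ x ∂F, 0 ≤ x)
    {t : ℝ} (ht : 0 ≤ t) :
    renewalMeasure F (Icc 0 t) ≤
      ENNReal.ofReal (exp 1 * (t + 1)) / ∫⁻ x, ENNReal.ofReal (x / (1 + x)) ∂F := by
  set s : ℝ := (t + 1)⁻¹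
  set L := ∫⁻ x, ENNReal.ofReal (exp (-(s * x))) ∂F
  set κ := ∫⁻ x, ENNReal.ofReal (x / (1 + x)) ∂F
  have hs0 : 0 < s := by positivity
  have hs1 : s ≤ 1 := inv_le_one_of_one_le₀ (by linarith)
  have hst : s * t ≤ 1 := by
    rw [inv_mul_le_iff₀ (by linarith)]; linarith
  have hsum : L + ENNReal.ofReal s * κ ≤ 1 := lintegral_exp_neg_mul_add_le_one F hF hs0.le hs1
  have hgap : ENNReal.ofReal s * κ ≤ 1 - L :=
    ENNReal.le_sub_of_add_le_left (ne_top_of_le_ne_top ENNReal.one_ne_top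
      (le_self_add.trans hsum)) hsum
  calc renewalMeasure F (Icc 0 t) = ∑' n, convPow F n (Icc 0 t) :=
        renewalMeasure_apply F measurableSet_Icc
    _ ≤ ∑' n, ENNReal.ofReal (exp (s * t)) * L ^ n := by
        refine ENNReal.tsum_le_tsum fun n => (measure_mono Icc_subset_Iic_self).trans ?_
        rw [← lintegral_exp_neg_mul_convPow]
        exact measure_Iic_le_exp_mul_lintegral _ hs0.le t
    _ = ENNReal.ofReal (exp (s * t)) * (1 - L)⁻¹ := by
        rw [ENNReal.tsum_mul_left, ENNReal.tsum_geometric]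
    _ ≤ ENNReal.ofReal (exp 1) * (ENNReal.ofReal s * κ)⁻¹ := by
        gcongr
    _ = ENNReal.ofReal (exp 1 * (t + 1)) / κ := by
        rw [ENNReal.mul_inv (Or.inl (by simpa using hs0)) (Or.inl ENNReal.ofReal_ne_top),
          ← ENNReal.ofReal_inv_of_pos hs0, inv_inv, ← mul_assoc,
          ← ENNReal.ofReal_mul (exp_nonneg _), div_eq_mul_inv]

theorem renewalMeasure_Icc_le_linear (F : Measure ℝ) [IsProbabilityMeasure F]
    (hF : ∀ᵐ x ∂F, 0 < x) :
    ∃ C : ℝ, 0 ≤ C ∧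
      ∀ t : ℝ, 0 ≤ t → renewalMeasure F (Icc 0 t) ≤ ENNReal.ofReal (C * (t + 1)) := by
  set κ := ∫⁻ x, ENNReal.ofReal (x / (1 + x)) ∂F
  have hF' : ∀ᵐ x ∂F, 0 ≤ x := hF.mono fun _ hx => hx.le
  have hκ0 : κ ≠ 0 := by
    rw [Ne, lintegral_eq_zero_iff (by fun_prop)]
    intro h
    obtain ⟨x, hx, hx0⟩ := (hF.and h).exists
    exact (show 0 < x / (1 + x) by positivity).not_ge (ENNReal.ofReal_eq_zero.1 hx0)
  have hκtop : κ ≠ ∞ := by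
    have h := le_add_self.trans (lintegral_exp_neg_mul_add_le_one F hF' zero_le_one le_rfl)
    rw [ENNReal.ofReal_one, one_mul] at h
    exact ne_top_of_le_ne_top ENNReal.one_ne_top h
  refine ⟨exp 1 / κ.toReal, by positivity,
    fun t ht => (renewalMeasure_Icc_le F hF' ht).trans_eq ?_⟩
  rw [show exp 1 / κ.toReal * (t + 1) = exp 1 * (t + 1) / κ.toReal by ring,
    ENNReal.ofReal_div_of_pos (ENNReal.toReal_pos hκ0 hκtop), ENNReal.ofReal_toReal hκtop]

lemma measurable_sInf_setOf_mem {Ω : Type*} [MeasurableSpace Ω] {A : ℕ → Set Ω}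
    (hA : ∀ n, MeasurableSet (A n)) : Measurable fun ω => sInf {n | ω ∈ A n} := by
  refine measurable_of_Iic fun k => ?_
  have hpre : (fun ω => sInf {n | ω ∈ A n}) ⁻¹' Iic k = (⋃ n ≤ k, A n) ∪ ⋂ n, (A n)ᶜ := by
    ext ω
    simp only [mem_preimage, mem_Iic, mem_union, mem_iUnion, mem_iInter, mem_compl_iff,
      exists_prop]
    by_cases hne : {n | ω ∈ A n}.Nonempty
    · refine ⟨fun h => Or.inl ⟨_, h, Nat.sInf_mem hne⟩, ?_⟩
      rintro (⟨n, hnk, hn⟩ | h)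
      · exact (Nat.sInf_le hn).trans hnk
      · exact absurd hne (by simpa [Set.Nonempty] using h)
    · rw [Set.not_nonempty_iff_eq_empty.1 hne, Nat.sInf_empty]
      simp only [zero_le, true_iff]
      exact Or.inr fun n hn => hne ⟨n, hn⟩
  rw [hpre]
  exact (MeasurableSet.biUnion (to_countable _) fun n _ => hA n).union
    (MeasurableSet.iInter fun n => (hA n).compl)

lemma lintegral_comp_mul_comp_of_indepFun {Ω : Type*} [MeasurableSpace Ω] {P : Measure Ω}
    {X Y : Ω → ℝ} (hX : Measurable X) (hY : Measurable Y) (hXY : IndepFun X Y P)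
    {f g : ℝ → ℝ≥0∞} (hf : Measurable f) (hg : Measurable g) :
    ∫⁻ ω, f (X ω) * g (Y ω) ∂P = (∫⁻ x, f x ∂P.map X) * ∫⁻ y, g y ∂P.map Y := by
  rw [lintegral_map hf hX, lintegral_map hg hY]
  exact lintegral_mul_eq_lintegral_mul_lintegral_of_indepFun'' (hf.comp hX).aemeasurable
    (hg.comp hY).aemeasurable (hXY.comp hf hg)

section RenewalProcess

variable {Ω : Type*}

def renewalEpoch (τ : ℕ → Ω → ℝ) (n : ℕ) (ω : Ω) : ℝ :=
  ∑ i ∈ Finset.range n, τ i ω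

noncomputable def renewalCount (τ : ℕ → Ω → ℝ) (t : ℝ) (ω : Ω) : ℕ :=
  sInf {n | t < renewalEpoch τ n ω}

noncomputable def forwardRecurrence (τ : ℕ → Ω → ℝ) (t : ℝ) (ω : Ω) : ℝ :=
  renewalEpoch τ (renewalCount τ t ω) ω - t

variable {τ : ℕ → Ω → ℝ}

@[simp] lemma renewalEpoch_zero (ω : Ω) : renewalEpoch τ 0 ω = 0 := by
  simp [renewalEpoch]

lemma renewalEpoch_succ (n : ℕ) (ω : Ω) :
    renewalEpoch τ (n + 1) ω = renewalEpoch τ n ω + τ n ω :=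
  Finset.sum_range_succ _ _

lemma renewalEpoch_eq_sum (n : ℕ) : renewalEpoch τ n = ∑ i ∈ Finset.range n, τ i := by
  ext ω; simp [renewalEpoch]

lemma renewalEpoch_nonneg (hτ : ∀ i ω, 0 ≤ τ i ω) (n : ℕ) (ω : Ω) : 0 ≤ renewalEpoch τ n ω :=
  Finset.sum_nonneg fun i _ => hτ i ω

lemma exists_forwardRecurrence_le {t : ℝ} (ht : 0 ≤ t) {ω : Ω}
    (h : ∃ n, t < renewalEpoch τ n ω) :
    ∃ m, renewalEpoch τ m ω ≤ t ∧ 0 < forwardRecurrence τ t ω ∧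
      forwardRecurrence τ t ω ≤ τ m ω := by
  have hlt : t < renewalEpoch τ (renewalCount τ t ω) ω := Nat.sInf_mem h
  obtain ⟨m, hm⟩ : ∃ m, renewalCount τ t ω = m + 1 := by
    refine Nat.exists_eq_succ_of_ne_zero fun h0 => ?_
    rw [h0, renewalEpoch_zero] at hlt
    linarith
  have hle : renewalEpoch τ m ω ≤ t :=
    not_lt.1 (Nat.notMem_of_lt_sInf (m := m) (by rw [← renewalCount, hm]; omega))
  have hB : forwardRecurrence τ t ω = renewalEpoch τ m ω + τ m ω - t := by
    rw [forwardRecurrence, hm, renewalEpoch_succ]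
  rw [hm, renewalEpoch_succ] at hlt
  exact ⟨m, hle, by linarith, by linarith⟩

variable [MeasurableSpace Ω]

lemma measurable_renewalEpoch (hτ : ∀ i, Measurable (τ i)) (n : ℕ) :
    Measurable (renewalEpoch τ n) :=
  Finset.measurable_sum (Finset.range n) fun i _ => hτ i

lemma measurable_forwardRecurrence (hτ : ∀ i, Measurable (τ i)) (t : ℝ) :
    Measurable (forwardRecurrence τ t) := by
  have hcount : Measurable (renewalCount τ t) :=
    measurable_sInf_setOf_mem fun n => measurableSet_lt measurable_const
      (measurable_renewalEpoch hτ n)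
  have hpair : Measurable fun p : Ω × ℕ => renewalEpoch τ p.2 p.1 :=
    measurable_from_prod_countable_left (measurable_renewalEpoch hτ)
  exact (hpair.comp (measurable_id.prodMk hcount)).sub_const t

variable {P : Measure Ω}

lemma indepFun_renewalEpoch (hτ : ∀ i, Measurable (τ i)) (hindep : iIndepFun τ P) (n : ℕ) :
    IndepFun (renewalEpoch τ n) (τ n) P :=
  renewalEpoch_eq_sum (τ := τ) n ▸ hindep.indepFun_sum_range_succ hτ n

variable [IsProbabilityMeasure P] {F : Measure ℝ}

lemma map_renewalEpoch (hτ : ∀ i, Measurable (τ i)) (hlaw : ∀ i, P.map (τ i) = F)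
    (hindep : iIndepFun τ P) (n : ℕ) : P.map (renewalEpoch τ n) = convPow F n := by
  induction n with
  | zero =>
    rw [show renewalEpoch τ 0 = fun _ => 0 from funext renewalEpoch_zero]
    simp [convPow]
  | succ n ih =>
    have hsplit : renewalEpoch τ (n + 1) = renewalEpoch τ n + τ n :=
      funext (renewalEpoch_succ n)
    rw [hsplit, (indepFun_renewalEpoch hτ hindep n).map_add_eq_map_conv_map
      (measurable_renewalEpoch hτ n) (hτ n), ih, hlaw, convPow]

-- Off this event `renewalCount τ t ω = sInf ∅ = 0`, so `forwardRecurrence τ t ω = -t`.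
lemma ae_exists_lt_renewalEpoch (hτ0 : ∀ i ω, 0 ≤ τ i ω) (hτ : ∀ i, Measurable (τ i))
    (hlaw : ∀ i, P.map (τ i) = F) (hindep : iIndepFun τ P) {t : ℝ}
    (hΦ : renewalMeasure F (Icc 0 t) ≠ ∞) : ∀ᵐ ω ∂P, ∃ n, t < renewalEpoch τ n ω := by
  have hprob (n : ℕ) : P (renewalEpoch τ n ⁻¹' Icc 0 t) = convPow F n (Icc 0 t) := by
    rw [← map_renewalEpoch hτ hlaw hindep, Measure.map_apply (measurable_renewalEpoch hτ n)
      measurableSet_Icc]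
  rw [renewalMeasure_apply F measurableSet_Icc, ← funext hprob] at hΦ
  filter_upwards [ae_eventually_notMem hΦ] with ω hω
  obtain ⟨n, hn⟩ := hω.exists
  exact ⟨n, lt_of_not_ge fun h => hn ⟨renewalEpoch_nonneg hτ0 n ω, h⟩⟩

lemma lintegral_forwardRecurrence_rpow_le (hτ0 : ∀ i ω, 0 ≤ τ i ω) (hτ : ∀ i, Measurable (τ i))
    (hlaw : ∀ i, P.map (τ i) = F) (hindep : iIndepFun τ P) {q t : ℝ} (hq : 0 ≤ q) (ht : 0 ≤ t)
    (hΦ : renewalMeasure F (Icc 0 t) ≠ ∞) :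
    ∫⁻ ω, ENNReal.ofReal (forwardRecurrence τ t ω ^ q) ∂P ≤
      renewalMeasure F (Icc 0 t) * ∫⁻ x, ENNReal.ofReal (x ^ q) ∂F := by
  set f : ℝ → ℝ≥0∞ := (Icc 0 t).indicator 1
  set g : ℝ → ℝ≥0∞ := fun x => ENNReal.ofReal (x ^ q)
  have hf : Measurable f := measurable_one.indicator measurableSet_Icc
  have hg : Measurable g := by fun_prop
  have hdom : ∀ᵐ ω ∂P, ENNReal.ofReal (forwardRecurrence τ t ω ^ q) ≤
      ∑' n, f (renewalEpoch τ n ω) * g (τ n ω) := by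
    filter_upwards [ae_exists_lt_renewalEpoch hτ0 hτ hlaw hindep hΦ] with ω hω
    obtain ⟨m, hm, hpos, hle⟩ := exists_forwardRecurrence_le ht hω
    refine le_trans ?_ (ENNReal.le_tsum m)
    have hmem : renewalEpoch τ m ω ∈ Icc 0 t := ⟨renewalEpoch_nonneg hτ0 m ω, hm⟩
    rw [show f (renewalEpoch τ m ω) = 1 from indicator_of_mem hmem _, one_mul]
    exact ENNReal.ofReal_le_ofReal (rpow_le_rpow hpos.le hle hq)
  calc ∫⁻ ω, ENNReal.ofReal (forwardRecurrence τ t ω ^ q) ∂P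
      ≤ ∫⁻ ω, ∑' n, f (renewalEpoch τ n ω) * g (τ n ω) ∂P := lintegral_mono_ae hdom
    _ = ∑' n, ∫⁻ ω, f (renewalEpoch τ n ω) * g (τ n ω) ∂P :=
        lintegral_tsum fun n =>
          ((hf.comp (measurable_renewalEpoch hτ n)).mul (hg.comp (hτ n))).aemeasurable
    _ = ∑' n, convPow F n (Icc 0 t) * ∫⁻ x, g x ∂F := by
        congr 1 with n
        rw [lintegral_comp_mul_comp_of_indepFun (measurable_renewalEpoch hτ n) (hτ n)
          (indepFun_renewalEpoch hτ hindep n) hf hg,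
          map_renewalEpoch hτ hlaw hindep, hlaw, lintegral_indicator_one measurableSet_Icc]
    _ = renewalMeasure F (Icc 0 t) * ∫⁻ x, g x ∂F := by
        rw [ENNReal.tsum_mul_right, renewalMeasure_apply F measurableSet_Icc]

theorem integral_forwardRecurrence_rpow_le (hτ0 : ∀ i ω, 0 ≤ τ i ω)
    (hτ : ∀ i, Measurable (τ i)) (hlaw : ∀ i, P.map (τ i) = F) (hindep : iIndepFun τ P)
    {q t : ℝ} (hq : 0 ≤ q) (hmom : Integrable (fun x => x ^ q) F) (ht : 0 ≤ t)
    (hΦ : renewalMeasure F (Icc 0 t) ≠ ∞) :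
    ∫ ω, forwardRecurrence τ t ω ^ q ∂P ≤
      (∫ x, x ^ q ∂F) * (renewalMeasure F (Icc 0 t)).toReal := by
  have hF : 0 ≤ᵐ[F] fun x => x ^ q := by
    have h := (ae_map_iff (hτ 0).aemeasurable measurableSet_Ici).2 (ae_of_all P (hτ0 0))
    rw [hlaw] at h
    exact h.mono fun x hx => rpow_nonneg hx q
  have hB : 0 ≤ᵐ[P] fun ω => forwardRecurrence τ t ω ^ q := by
    filter_upwards [ae_exists_lt_renewalEpoch hτ0 hτ hlaw hindep hΦ] with ω hω
    obtain ⟨_, _, hpos, _⟩ := exists_forwardRecurrence_le ht hω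
    exact rpow_nonneg hpos.le q
  rw [integral_eq_lintegral_of_nonneg_ae hB
      ((measurable_forwardRecurrence hτ t).pow_const q).aestronglyMeasurable,
    integral_eq_lintegral_of_nonneg_ae hF hmom.1, mul_comm, ← ENNReal.toReal_mul]
  exact ENNReal.toReal_mono (ENNReal.mul_ne_top hΦ hmom.lintegral_lt_top.ne)
    (lintegral_forwardRecurrence_rpow_le hτ0 hτ hlaw hindep hq ht hΦ)

end RenewalProcess

theorem stmt10_general {Ω : Type*} [MeasurableSpace Ω] (P : Measure Ω) [IsProbabilityMeasure P]
    (τ : ℕ → Ω → ℝ) (hτmeas : ∀ i, Measurable (τ i)) (hτpos : ∀ i ω, 0 < τ i ω)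
    (F : Measure ℝ) [IsProbabilityMeasure F]
    (hlaw : ∀ i, P.map (τ i) = F)
    (hindep : iIndepFun τ P)
    (q : ℝ) (hq : 0 < q) (hmom : Integrable (fun x => x ^ q) F)
    (S : ℕ → Ω → ℝ) (hS : ∀ n ω, S n ω = ∑ i ∈ Finset.range n, τ i ω)
    (N : ℝ → Ω → ℕ) (hN : ∀ t ω, N t ω = sInf {n | t < S n ω})
    (B : ℝ → Ω → ℝ) (hB : ∀ t ω, B t ω = S (N t ω) ω - t) :
    (∀ t : ℝ, 0 ≤ t →
        ∫ ω, B t ω ^ q ∂P ≤ (∫ x, x ^ q ∂F) * (renewalMeasure F (Set.Icc 0 t)).toReal) ∧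
      ∃ a b : ℝ, 0 < a ∧ 0 < b ∧ ∀ t : ℝ, 0 ≤ t → ∫ ω, B t ω ^ q ∂P ≤ a + b * t := by
  obtain rfl : S = renewalEpoch τ := funext₂ hS
  obtain rfl : N = renewalCount τ := funext₂ hN
  obtain rfl : B = forwardRecurrence τ := funext₂ hB
  have hτ0 (i : ℕ) (ω : Ω) : 0 ≤ τ i ω := (hτpos i ω).le
  have hF : ∀ᵐ x ∂F, 0 < x := by
    rw [← hlaw 0]
    exact (ae_map_iff (hτmeas 0).aemeasurable measurableSet_Ioi).2 (ae_of_all P (hτpos 0))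
  obtain ⟨C, hC0, hC⟩ := renewalMeasure_Icc_le_linear F hF
  have hΦ (t : ℝ) (ht : 0 ≤ t) : renewalMeasure F (Icc 0 t) ≠ ∞ :=
    ne_top_of_le_ne_top ENNReal.ofReal_ne_top (hC t ht)
  have hmoment (t : ℝ) (ht : 0 ≤ t) :=
    integral_forwardRecurrence_rpow_le hτ0 hτmeas hlaw hindep hq.le hmom ht (hΦ t ht)
  refine ⟨hmoment, ?_⟩
  set M := ∫ x, x ^ q ∂F
  have hM : 0 ≤ M := integral_nonneg_of_ae (hF.mono fun x hx => rpow_nonneg hx.le q)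
  refine ⟨M * C + 1, M * C + 1, by positivity, by positivity, fun t ht => ?_⟩
  have hΦt : (renewalMeasure F (Icc 0 t)).toReal ≤ C * (t + 1) :=
    ENNReal.toReal_le_of_le_ofReal (by positivity) (hC t ht)
  calc ∫ ω, forwardRecurrence τ t ω ^ q ∂P ≤ M * (renewalMeasure F (Icc 0 t)).toReal :=
        hmoment t ht
    _ ≤ M * (C * (t + 1)) := mul_le_mul_of_nonneg_left hΦt hM
    _ ≤ (M * C + 1) + (M * C + 1) * t := by nlinarith [mul_nonneg hM hC0]

/-- For a zero-delayed renewal process with interarrival distribution `F` of finite mean and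
finite `q`-th moment, and forward recurrence time `B_t`, one has
`E[B_t^q] ≤ (∫₀^∞ x^q F(dx)) Φ(t)` for all `t ≥ 0`; consequently there are constants
`a, b > 0` with `E[B_t^q] ≤ a + b t` for all `t ≥ 0`. -/
theorem stmt10 {Ω : Type*} [MeasurableSpace Ω] (P : Measure Ω) [IsProbabilityMeasure P]
    (τ : ℕ → Ω → ℝ) (hτmeas : ∀ i, Measurable (τ i)) (hτpos : ∀ i ω, 0 < τ i ω)
    (F : Measure ℝ) [IsProbabilityMeasure F]
    (hlaw : ∀ i, P.map (τ i) = F)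
    (hindep : iIndepFun τ P)
    (hmeanfin : Integrable (fun x => x) F)
    (q : ℝ) (hq : 0 < q) (hmom : Integrable (fun x => x ^ q) F)
    (S : ℕ → Ω → ℝ) (hS : ∀ n ω, S n ω = ∑ i ∈ Finset.range n, τ i ω)
    (N : ℝ → Ω → ℕ) (hN : ∀ t ω, N t ω = sInf {n | t < S n ω})
    (B : ℝ → Ω → ℝ) (hB : ∀ t ω, B t ω = S (N t ω) ω - t) :
    (∀ t : ℝ, 0 ≤ t →
        ∫ ω, B t ω ^ q ∂P ≤ (∫ x, x ^ q ∂F) * (renewalMeasure F (Set.Icc 0 t)).toReal) ∧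
      ∃ a b : ℝ, 0 < a ∧ 0 < b ∧ ∀ t : ℝ, 0 ≤ t → ∫ ω, B t ω ^ q ∂P ≤ a + b * t :=
  stmt10_general P τ hτmeas hτpos F hlaw hindep q hq hmom S hS N hN B hB
end

section
/- If F is a spread out probability distribution on [0,∞) (i.e., some convolution power F^{*n} has a nonzero absolutely continuous component), then there exist a, b > 0, δ > 0 and n₀ ≥ 1 such that F^{*n₀} has a uniform component on (a, a+b): F^{*n₀}((u, v]) ≥ δ(v − u) for all a < u < v < a + b. -/
/-!
Take the part of the absolutely continuous component of `F^{*n}` that lives on `(0, ∞)`: its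
density exceeds some `ε > 0` on a set `A` of positive measure, so `F^{*2n} ≥ ε² (λ|_A ∗ λ|_A)`,
and `λ|_A ∗ λ|_A` has density `t ↦ λ(A ∩ (t - A))`. If `x₀` is a Lebesgue density point of `A`,
then for small `r` both `A` and `t - A` fill more than three quarters of the balls of radius `r`
and `r / 2` around `x₀` whenever `|t - 2x₀| ≤ r / 2`, which forces `λ(A ∩ (t - A)) ≥ r / 4`.
-/

open MeasureTheory

open Measure Set Filter Metric Topology
open scoped ENNReal NNReal

theorem MeasureTheory.Measure.conv_mono {M : Type*} [AddMonoid M] [MeasurableSpace M]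
    [MeasurableAdd₂ M] {μ₁ μ₂ ν₁ ν₂ : Measure M} [SFinite ν₂] (hμ : μ₁ ≤ μ₂) (hν : ν₁ ≤ ν₂) :
    μ₁ ∗ ν₁ ≤ μ₂ ∗ ν₂ :=
  map_mono (prod_mono hμ hν) measurable_add

theorem MeasureTheory.Measure.restrict_conv_restrict {G : Type*} [AddGroup G] [MeasurableSpace G]
    [MeasurableAdd₂ G] [MeasurableNeg G] (μ : Measure G) [SFinite μ] [μ.IsAddLeftInvariant]
    {s u : Set G} (hs : MeasurableSet s) (hu : MeasurableSet u) :
    μ.restrict s ∗ μ.restrict u = μ.withDensity fun t ↦ μ (s ∩ (fun y ↦ -y + t) ⁻¹' u) := by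
  rw [← withDensity_indicator_one hs, ← withDensity_indicator_one hu,
    conv_withDensity_eq_lconvolution (measurable_one.indicator hs) (measurable_one.indicator hu)]
  congr with t
  rw [lconvolution_def, ← lintegral_indicator_one (hs.inter (hu.preimage (by fun_prop)))]
  congr with y
  rw [inter_indicator_one]
  rfl

theorem MeasureTheory.Measure.exists_smul_restrict_le_of_absolutelyContinuous {α : Type*}
    [MeasurableSpace α] {μ G : Measure α} [G.HaveLebesgueDecomposition μ] (hGμ : G ≪ μ)
    {s : Set α} (hs : MeasurableSet s) (hGs : G s ≠ 0) :
    ∃ (ε : ℝ≥0) (A : Set α), 0 < ε ∧ MeasurableSet A ∧ A ⊆ s ∧ μ A ≠ 0 ∧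
      (ε : ℝ≥0∞) • μ.restrict A ≤ G := by
  set g := G.rnDeriv μ
  have hg : Measurable g := measurable_rnDeriv G μ
  have hG : μ.withDensity g = G := withDensity_rnDeriv_eq G μ hGμ
  set ε : ℕ → ℝ≥0 := fun n ↦ (n + 1)⁻¹
  set A : ℕ → Set α := fun n ↦ s ∩ {x | ε n ≤ g x}
  have hA : ∀ n, MeasurableSet (A n) := fun n ↦ hs.inter (measurableSet_le measurable_const hg)
  have hcover : Function.support g ∩ s ⊆ ⋃ n, A n := by
    rintro x ⟨hx, hxs⟩
    obtain ⟨n, hn⟩ := ENNReal.exists_inv_nat_lt hx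
    refine mem_iUnion.2 ⟨n, hxs, le_trans ?_ hn.le⟩
    rw [ENNReal.coe_inv (by positivity), ENNReal.inv_le_inv]
    push_cast
    exact le_self_add
  obtain ⟨n, hn⟩ : ∃ n, μ (A n) ≠ 0 := by
    by_contra! h
    refine hGs (nonpos_iff_eq_zero.1 ?_)
    rw [← hG, withDensity_apply _ hs, ← not_lt, setLIntegral_pos_iff hg, not_lt]
    exact (measure_mono hcover).trans (measure_iUnion_null h).le
  refine ⟨ε n, A n, by positivity, hA n, inter_subset_left, hn, le_iff.2 fun t ht ↦ ?_⟩
  rw [smul_apply, smul_eq_mul, restrict_apply ht, ← setLIntegral_const, ← hG,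
    withDensity_apply _ ht]
  calc ∫⁻ _ in t ∩ A n, (ε n : ℝ≥0∞) ∂μ ≤ ∫⁻ x in t ∩ A n, g x ∂μ :=
        setLIntegral_mono' (ht.inter (hA n)) fun x hx ↦ hx.2.2
    _ ≤ ∫⁻ x in t, g x ∂μ := lintegral_mono_set inter_subset_left

theorem MeasureTheory.measure_inter_add_measure_inter_le {α : Type*} [MeasurableSpace α]
    (μ : Measure α) {s u I : Set α} (hu : MeasurableSet u) (hI : MeasurableSet I) :
    μ (s ∩ I) + μ (u ∩ I) ≤ μ I + μ (s ∩ u) := by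
  rw [← measure_union_add_inter _ (hu.inter hI)]
  exact add_le_add (measure_mono (union_subset inter_subset_right inter_subset_right))
    (measure_mono fun x hx ↦ ⟨hx.1.1, hx.2.1⟩)

theorem MeasureTheory.Measure.conv_Iio_zero {μ ν : Measure ℝ} [SFinite ν] (hμ : μ (Iio 0) = 0)
    (hν : ν (Iio 0) = 0) :
    (μ ∗ ν) (Iio 0) = 0 := by
  rw [conv, map_apply measurable_add measurableSet_Iio]
  refine measure_mono_null (t := Iio 0 ×ˢ univ ∪ univ ×ˢ Iio 0) ?_ (measure_union_null ?_ ?_)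
  · rintro ⟨x, y⟩ (h : x + y < 0)
    by_contra! hxy
    simp only [mem_union, mem_prod, mem_Iio, mem_univ, and_true, true_and, not_or, not_lt] at hxy
    linarith
  · rw [prod_prod, hμ, zero_mul]
  · rw [prod_prod, hν, mul_zero]

theorem measure_Ioi_ne_zero_of_absolutelyContinuous {G : Measure ℝ} (hG0 : G ≠ 0)
    (hGac : G ≪ volume) {a : ℝ} (hG : G (Iio a) = 0) : G (Ioi a) ≠ 0 := by
  have hIic : G (Iic a) = 0 := by
    rw [← Iio_union_right]
    exact measure_union_null hG (hGac Real.volume_singleton)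
  intro hIoi
  refine hG0 (measure_univ_eq_zero.1 (nonpos_iff_eq_zero.1 ?_))
  calc G univ = G (Iic a ∪ Ioi a) := by rw [Iic_union_Ioi]
    _ ≤ G (Iic a) + G (Ioi a) := measure_union_le _ _
    _ = 0 := by rw [hIic, hIoi, add_zero]

theorem Real.ofReal_div_four_le_volume_inter_neg_add_preimage {A : Set ℝ} (hA : MeasurableSet A)
    {x₀ r t : ℝ} (hr : 0 ≤ r)
    (hr₁ : ENNReal.ofReal (3 / 2 * r) ≤ volume (A ∩ closedBall x₀ r))
    (hr₂ : ENNReal.ofReal (3 / 4 * r) ≤ volume (A ∩ closedBall x₀ (r / 2)))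
    (ht : t ∈ closedBall (2 * x₀) (r / 2)) :
    ENNReal.ofReal (r / 4) ≤ volume (A ∩ (fun y ↦ -y + t) ⁻¹' A) := by
  set R : ℝ → ℝ := fun y ↦ -y + t
  have hR : MeasurePreserving R volume volume :=
    (measurePreserving_add_right volume t).comp (Measure.measurePreserving_neg volume)
  have hRA : MeasurableSet (R ⁻¹' A) := hA.preimage hR.measurable
  -- `R x₀ = t - x₀` lies within `r / 2` of `x₀`.
  have hreflect : A ∩ closedBall x₀ (r / 2) ⊆ R ⁻¹' (R ⁻¹' A ∩ closedBall x₀ r) := by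
    rintro y ⟨hyA, hy⟩
    refine ⟨by simpa [R] using hyA, ?_⟩
    rw [mem_closedBall, Real.dist_eq] at hy ht ⊢
    calc |-y + t - x₀| = |(t - 2 * x₀) - (y - x₀)| := by ring_nf
      _ ≤ r := by linarith [abs_sub (t - 2 * x₀) (y - x₀)]
  have hr₃ : ENNReal.ofReal (3 / 4 * r) ≤ volume (R ⁻¹' A ∩ closedBall x₀ r) :=
    hr₂.trans ((measure_mono hreflect).trans_eq
      (hR.measure_preimage (hRA.inter measurableSet_closedBall).nullMeasurableSet))
  have hsum := measure_inter_add_measure_inter_le volume (s := A) hRA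
    (measurableSet_closedBall (x := x₀) (ε := r))
  rw [Real.volume_closedBall] at hsum
  refine (ENNReal.add_le_add_iff_left ENNReal.ofReal_ne_top).1 (le_trans ?_ hsum)
  rw [← ENNReal.ofReal_add (by positivity) (by positivity)]
  calc ENNReal.ofReal (2 * r + r / 4)
        = ENNReal.ofReal (3 / 2 * r) + ENNReal.ofReal (3 / 4 * r) := by
        rw [← ENNReal.ofReal_add (by positivity) (by positivity)]; ring_nf
    _ ≤ _ := add_le_add hr₁ hr₃

theorem Real.eventually_ofReal_div_four_le_volume_inter_neg_add_preimage {A : Set ℝ}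
    (hA : MeasurableSet A) {x₀ : ℝ}
    (hx₀ : Tendsto (fun r ↦ volume (A ∩ closedBall x₀ r) / volume (closedBall x₀ r))
      (𝓝[>] 0) (𝓝 1)) :
    ∀ᶠ r in 𝓝[>] 0, ∀ t ∈ closedBall (2 * x₀) (r / 2),
      ENNReal.ofReal (r / 4) ≤ volume (A ∩ (fun y ↦ -y + t) ⁻¹' A) := by
  have hdense : ∀ᶠ r in 𝓝[>] 0, ENNReal.ofReal (3 / 2 * r) ≤ volume (A ∩ closedBall x₀ r) := by
    have h34 : ENNReal.ofReal (3 / 4) < 1 := ENNReal.ofReal_lt_one.2 (by norm_num)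
    filter_upwards [hx₀.eventually (eventually_gt_nhds h34), self_mem_nhdsWithin]
      with r hr (hr0 : 0 < r)
    rw [Real.volume_closedBall] at hr
    calc ENNReal.ofReal (3 / 2 * r) = ENNReal.ofReal (3 / 4) * ENNReal.ofReal (2 * r) := by
          rw [← ENNReal.ofReal_mul (by norm_num)]; ring_nf
      _ ≤ _ := (ENNReal.mul_lt_of_lt_div hr).le
  have hhalf : Tendsto (fun r : ℝ ↦ r / 2) (𝓝[>] 0) (𝓝[>] 0) := by
    refine tendsto_nhdsWithin_iff.2
      ⟨?_, eventually_nhdsWithin_of_forall fun r (hr : 0 < r) ↦ half_pos hr⟩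
    simpa using ((continuous_id.div_const (2 : ℝ)).tendsto 0).mono_left nhdsWithin_le_nhds
  filter_upwards [hdense, hhalf.eventually hdense, self_mem_nhdsWithin] with r hr₁ hr₂ (hr : 0 < r)
  exact fun t ht ↦ Real.ofReal_div_four_le_volume_inter_neg_add_preimage hA hr.le hr₁
    (by convert hr₂ using 2; ring) ht

theorem Real.exists_mem_tendsto_density {A : Set ℝ} (hA : MeasurableSet A) (hA0 : volume A ≠ 0) :
    ∃ x₀ ∈ A, Tendsto (fun r ↦ volume (A ∩ closedBall x₀ r) / volume (closedBall x₀ r))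
      (𝓝[>] 0) (𝓝 1) :=
  have : (ae (volume.restrict A)).NeBot := ae_neBot.2 (by rwa [Ne, restrict_eq_zero])
  ((ae_restrict_mem hA).and (Besicovitch.ae_tendsto_measure_inter_div volume A)).exists

theorem Real.exists_ofReal_mul_le_restrict_conv_restrict {A : Set ℝ} (hA : MeasurableSet A)
    (hApos : A ⊆ Ioi 0) (hA0 : volume A ≠ 0) :
    ∃ a b c : ℝ, 0 < a ∧ 0 < b ∧ 0 < c ∧ ∀ u v, a < u → u < v → v < a + b →
      ENNReal.ofReal (c * (v - u)) ≤ (volume.restrict A ∗ volume.restrict A) (Ioc u v) := by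
  obtain ⟨x₀, hx₀A, hx₀⟩ := Real.exists_mem_tendsto_density hA hA0
  obtain ⟨r, hr, hr0, hrx₀⟩ :=
    ((Real.eventually_ofReal_div_four_le_volume_inter_neg_add_preimage hA hx₀).and
      (Ioo_mem_nhdsGT (hApos hx₀A))).exists
  refine ⟨2 * x₀ - r / 2, r, r / 4, by linarith, hr0, by positivity, fun u v hu huv hv ↦ ?_⟩
  rw [restrict_conv_restrict volume hA hA, withDensity_apply _ measurableSet_Ioc,
    ENNReal.ofReal_mul (by positivity), ← Real.volume_Ioc, ← setLIntegral_const]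
  refine setLIntegral_mono' measurableSet_Ioc fun t ht ↦ hr t ?_
  rw [mem_closedBall, Real.dist_eq, abs_le]
  constructor <;> linarith [ht.1, ht.2]

section convPow

variable (F : Measure ℝ)

instance [SFinite F] (n : ℕ) : SFinite (convPow F n) := by
  induction n with
  | zero => rw [convPow]; infer_instance
  | succ n ih => rw [convPow]; infer_instance

instance [IsProbabilityMeasure F] (n : ℕ) : IsProbabilityMeasure (convPow F n) := by
  induction n with
  | zero => rw [convPow]; infer_instance
  | succ n ih => rw [convPow]; infer_instance

theorem convPow_add [SFinite F] (m : ℕ) : ∀ k, convPow F (m + k) = convPow F m ∗ convPow F k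
  | 0 => (conv_dirac_zero _).symm
  | k + 1 => by rw [← add_assoc, convPow, convPow, convPow_add m k, conv_assoc]

theorem convPow_Iio_zero [SFinite F] (hF : F (Iio 0) = 0) (n : ℕ) : convPow F n (Iio 0) = 0 := by
  induction n with
  | zero => simp [convPow]
  | succ n ih => exact conv_Iio_zero ih hF

end convPow

/-- If a probability distribution `F` on `[0,∞)` is spread out (some convolution power `F^{*n}`
dominates a nonzero absolutely continuous measure `G`), then some convolution power `F^{*n₀}`
has a uniform component on an interval `(a, a+b)`:
`F^{*n₀}((u,v]) ≥ δ(v−u)` for all `a < u < v < a + b`. -/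
theorem stmt15 (F : Measure ℝ) [IsProbabilityMeasure F] (hsupp : F (Set.Iio 0) = 0)
    (hspread : ∃ (n : ℕ) (G : Measure ℝ), 1 ≤ n ∧ G ≠ 0 ∧ G ≤ convPow F n ∧
      G ≪ (volume : Measure ℝ)) :
    ∃ (a b δ : ℝ) (n₀ : ℕ), 0 < a ∧ 0 < b ∧ 0 < δ ∧ 1 ≤ n₀ ∧
      ∀ u v : ℝ, a < u → u < v → v < a + b →
        ENNReal.ofReal (δ * (v - u)) ≤ convPow F n₀ (Set.Ioc u v) := by
  obtain ⟨n, G, hn, hG0, hGF, hGac⟩ := hspread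
  have : IsFiniteMeasure G := isFiniteMeasure_of_le _ hGF
  have hGpos : G (Ioi 0) ≠ 0 := measure_Ioi_ne_zero_of_absolutelyContinuous hG0 hGac
    (nonpos_iff_eq_zero.1 ((hGF _).trans_eq (convPow_Iio_zero F hsupp n)))
  obtain ⟨ε, A, hε, hA, hApos, hA0, hεA⟩ :=
    exists_smul_restrict_le_of_absolutelyContinuous hGac measurableSet_Ioi hGpos
  obtain ⟨a, b, c, ha, hb, hc, hAA⟩ := Real.exists_ofReal_mul_le_restrict_conv_restrict hA hApos hA0
  refine ⟨a, b, ε ^ 2 * c, n + n, ha, hb, by positivity, by omega, fun u v hu huv hv ↦ ?_⟩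
  calc ENNReal.ofReal (ε ^ 2 * c * (v - u)) = ε ^ 2 * ENNReal.ofReal (c * (v - u)) := by
        rw [mul_assoc, ENNReal.ofReal_mul (by positivity), ← NNReal.coe_pow,
          ENNReal.ofReal_coe_nnreal, ENNReal.coe_pow]
    _ ≤ ε ^ 2 * (volume.restrict A ∗ volume.restrict A) (Ioc u v) := by
        gcongr
        exact hAA u v hu huv hv
    _ = (((ε : ℝ≥0∞) • volume.restrict A) ∗ ((ε : ℝ≥0∞) • volume.restrict A)) (Ioc u v) := by
        rw [conv_smul_left, conv_smul_right, smul_smul, sq]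
        rfl
    _ ≤ (G ∗ G) (Ioc u v) := conv_mono hεA hεA _
    _ ≤ convPow F (n + n) (Ioc u v) := by rw [convPow_add]; exact conv_mono hGF hGF _
end
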